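/- arXiv:1509.08305 — 7 statements merged into one kernel-verified Lean document; each statement's English description precedes it below -/
import Mathlib

section
/- The function g(x) = ((1+x)/x)·ln(1+x) is strictly increasing on (0, ∞), satisfies lim_{x→0⁺} g(x) = 1, and tends to +∞ as x → ∞. Consequently, for every y > 1 the equation g(x) = y has exactly one solution x > 0. -/
/-! Writing `t = 1 + x`, `g x = t log t / (t - 1)` is the slope of the secant of the strictly
convex function `t ↦ t log t` between `1` and `t`, so it is strictly increasing. The bounds
`x / (1 + x) ≤ log (1 + x) ≤ x` give `1 ≤ g x ≤ 1 + x`, whence the limit at `0⁺`, and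
`g x ≥ log (1 + x)` gives the divergence at `∞`. Existence and uniqueness of the solution of
`g x = y` then follow from the intermediate value theorem and strict monotonicity. -/

open Real Filter Set
open scoped Topology

theorem existsUnique_eq_of_strictMonoOn_Ioi_of_tendsto
    {α δ : Type*} [ConditionallyCompleteLinearOrder α] [TopologicalSpace α] [OrderTopology α]
    [DenselyOrdered α] [NoMaxOrder α] [LinearOrder δ] [TopologicalSpace δ]
    [OrderClosedTopology δ] {f : α → δ} {a : α} {L y : δ}
    (hmono : StrictMonoOn f (Ioi a)) (hcont : ContinuousOn f (Ioi a))
    (hleft : Tendsto f (𝓝[>] a) (𝓝 L)) (htop : Tendsto f atTop atTop) (hy : L < y) :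
    ∃! x, a < x ∧ f x = y := by
  obtain ⟨b, hby, hab⟩ :=
    ((hleft.eventually_lt_const hy).and self_mem_nhdsWithin).exists
  obtain ⟨c, hyc, hbc⟩ :=
    ((htop.eventually_ge_atTop y).and (eventually_ge_atTop b)).exists
  have hsub : Icc b c ⊆ Ioi a := fun z hz => lt_of_lt_of_le hab hz.1
  obtain ⟨x, hx, hfx⟩ :=
    intermediate_value_Icc hbc (hcont.mono hsub) ⟨hby.le, hyc⟩
  exact ⟨x, ⟨hsub hx, hfx⟩, fun z ⟨hz, hfz⟩ => hmono.injOn hz (hsub hx) (hfz.trans hfx.symm)⟩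

namespace SumRate

noncomputable def g (x : ℝ) : ℝ := (1 + x) / x * log (1 + x)

theorem g_eq_slope_mul_log (x : ℝ) :
    g x = ((1 + x) * log (1 + x) - 1 * log 1) / ((1 + x) - 1) := by
  rw [g, log_one, mul_zero, sub_zero, add_sub_cancel_left]
  ring

theorem strictMonoOn_g : StrictMonoOn g (Ioi 0) := by
  intro x (hx : 0 < x) y (hy : 0 < y) hxy
  rw [g_eq_slope_mul_log, g_eq_slope_mul_log]
  exact strictConvexOn_mul_log.secant_strict_mono (mem_Ici.2 zero_le_one)
    (mem_Ici.2 (by linarith)) (mem_Ici.2 (by linarith)) (by linarith) (by linarith)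
    (by linarith)

theorem continuousOn_g : ContinuousOn g (Ioi 0) := by
  intro x (hx : 0 < x)
  refine ContinuousAt.continuousWithinAt ?_
  unfold g
  fun_prop (disch := positivity)

theorem one_le_g {x : ℝ} (hx : 0 < x) : 1 ≤ g x := by
  have hlog := one_sub_inv_le_log_of_pos (by linarith : (0 : ℝ) < 1 + x)
  rw [g, div_mul_eq_mul_div, le_div_iff₀ hx]
  calc 1 * x = (1 + x) * (1 - (1 + x)⁻¹) := by field_simp; ring
    _ ≤ (1 + x) * log (1 + x) := by gcongr

theorem g_le_one_add {x : ℝ} (hx : 0 < x) : g x ≤ 1 + x := by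
  have hlog := log_le_sub_one_of_pos (by linarith : (0 : ℝ) < 1 + x)
  rw [g, div_mul_eq_mul_div, div_le_iff₀ hx]
  nlinarith

theorem log_one_add_le_g {x : ℝ} (hx : 0 < x) : log (1 + x) ≤ g x := by
  have hlog : 0 ≤ log (1 + x) := log_nonneg (by linarith)
  have hratio : 1 ≤ (1 + x) / x := by rw [le_div_iff₀ hx]; linarith
  exact le_mul_of_one_le_left hlog hratio

theorem tendsto_g_nhdsGT_zero : Tendsto g (𝓝[>] 0) (𝓝 1) := by
  have hupper : Tendsto (fun x : ℝ => 1 + x) (𝓝[>] 0) (𝓝 1) := by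
    simpa using ((continuous_const_add (1 : ℝ)).tendsto 0).mono_left nhdsWithin_le_nhds
  exact tendsto_of_tendsto_of_tendsto_of_le_of_le' tendsto_const_nhds hupper
    (eventually_nhdsWithin_of_forall fun _ => one_le_g)
    (eventually_nhdsWithin_of_forall fun _ => g_le_one_add)

theorem tendsto_g_atTop : Tendsto g atTop atTop := by
  have hlog : Tendsto (fun x : ℝ => log (1 + x)) atTop atTop :=
    tendsto_log_atTop.comp (tendsto_atTop_add_const_left _ 1 tendsto_id)
  exact tendsto_atTop_mono' _ ((eventually_gt_atTop 0).mono fun _ => log_one_add_le_g) hlog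

end SumRate

/-- `g x = ((1+x)/x) · ln (1+x)` is strictly increasing on `(0, ∞)`, tends to `1`
as `x → 0⁺`, tends to `+∞` as `x → ∞`, and hence for every `y > 1` the equation
`g x = y` has exactly one solution `x > 0`. -/
theorem stmt1 :
    StrictMonoOn (fun x : ℝ => ((1 + x) / x) * Real.log (1 + x)) (Set.Ioi 0) ∧
    Filter.Tendsto (fun x : ℝ => ((1 + x) / x) * Real.log (1 + x))
      (nhdsWithin 0 (Set.Ioi 0)) (nhds 1) ∧
    Filter.Tendsto (fun x : ℝ => ((1 + x) / x) * Real.log (1 + x))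
      Filter.atTop Filter.atTop ∧
    ∀ y : ℝ, 1 < y → ∃! x : ℝ, 0 < x ∧ ((1 + x) / x) * Real.log (1 + x) = y :=
  ⟨SumRate.strictMonoOn_g, SumRate.tendsto_g_nhdsGT_zero, SumRate.tendsto_g_atTop, fun _ hy =>
    existsUnique_eq_of_strictMonoOn_Ioi_of_tendsto SumRate.strictMonoOn_g SumRate.continuousOn_g
      SumRate.tendsto_g_nhdsGT_zero SumRate.tendsto_g_atTop hy⟩
end

section
/- Let M, c, K, τ_u > 0 be real constants, X(τ, p) = M·τ/(c·p²·K²), and R(τ, p) = p·K·(τ_u − τ)·log₂(1 + X(τ, p)). If (τ, p) with 0 < τ < τ_u and p > 0 is a stationary point of R (both partial derivatives vanish) with X = X(τ, p) > 0, then ((1 + X)/X)·ln(1 + X) = 2 and τ_u/τ = 1 + ((1 + X)/X)·ln(1 + X) = 3. -/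
/-!
Write `x = X(τ, p)`. Along `τ` the sum rate is a constant times `(τ_u − t) log(1 + a t)` with
`x = a τ`, and along `p` it is a constant times `q log(1 + b / q²)` with `x = b / p²`.
Setting the derivative in `p` to zero gives `log(1 + x) = 2x / (1 + x)`, and setting the
derivative in `τ` to zero gives `(τ_u − τ) / τ = ((1 + x)/x) log(1 + x)`; together `τ_u = 3τ`.
-/

open Real

theorem hasDerivAt_sub_mul_log_one_add_mul (T a t : ℝ) (h : 1 + a * t ≠ 0) :
    HasDerivAt (fun s => (T - s) * log (1 + a * s))
      (-log (1 + a * t) + (T - t) * (a / (1 + a * t))) t := by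
  have hlin : HasDerivAt (fun s => 1 + a * s) a t := by
    simpa using (hasDerivAt_id' t |>.const_mul a).const_add 1
  exact (hasDerivAt_id' t |>.const_sub T).fun_mul (hlin.log h) |>.congr_deriv (by ring)

theorem hasDerivAt_mul_log_one_add_div_sq (b q : ℝ) (hq : q ≠ 0) (h : 1 + b / q ^ 2 ≠ 0) :
    HasDerivAt (fun r => r * log (1 + b / r ^ 2))
      (log (1 + b / q ^ 2) - 2 * (b / q ^ 2) / (1 + b / q ^ 2)) q := by
  have hquot : HasDerivAt (fun r => 1 + b / r ^ 2) (-(2 * b) / q ^ 3) q :=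
    (hasDerivAt_const q b).fun_div (hasDerivAt_pow 2 q) (pow_ne_zero 2 hq) |>.const_add 1
      |>.congr_deriv (by field_simp; ring)
  exact (hasDerivAt_id' q).fun_mul (hquot.log h) |>.congr_deriv (by field_simp; ring)

theorem sub_div_eq_of_deriv_sub_mul_log_eq_zero {C T a τ : ℝ} (hC : C ≠ 0) (hτ : τ ≠ 0)
    (hx : 0 < a * τ) (h : deriv (fun t => C * ((T - t) * log (1 + a * t))) τ = 0) :
    (T - τ) / τ = (1 + a * τ) / (a * τ) * log (1 + a * τ) := by
  have hx1 : 1 + a * τ ≠ 0 := by positivity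
  rw [((hasDerivAt_sub_mul_log_one_add_mul T a τ hx1).const_mul C).deriv] at h
  have hcrit := (mul_eq_zero.mp h).resolve_left hC
  have ha : a ≠ 0 := left_ne_zero_of_mul hx.ne'
  field_simp at hcrit ⊢
  linear_combination hcrit

theorem div_mul_log_eq_two_of_deriv_mul_log_eq_zero {C b q : ℝ} (hC : C ≠ 0) (hq : q ≠ 0)
    (hx : 0 < b / q ^ 2) (h : deriv (fun r => C * (r * log (1 + b / r ^ 2))) q = 0) :
    (1 + b / q ^ 2) / (b / q ^ 2) * log (1 + b / q ^ 2) = 2 := by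
  have hx1 : 1 + b / q ^ 2 ≠ 0 := by positivity
  rw [((hasDerivAt_mul_log_one_add_div_sq b q hq hx1).const_mul C).deriv] at h
  have hcrit := (mul_eq_zero.mp h).resolve_left hC
  set x := b / q ^ 2
  field_simp at hcrit ⊢
  linear_combination hcrit

theorem stmt5_general (M c K τu : ℝ) (hK : 0 < K)
    (X R : ℝ → ℝ → ℝ)
    (hX : ∀ τ p : ℝ, X τ p = M * τ / (c * p ^ 2 * K ^ 2))
    (hR : ∀ τ p : ℝ, R τ p = p * K * (τu - τ) * Real.logb 2 (1 + X τ p))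
    (τ p : ℝ) (hτ : 0 < τ) (hττu : τ < τu) (hp : 0 < p) (hXpos : 0 < X τ p)
    (hstat1 : deriv (fun t => R t p) τ = 0)
    (hstat2 : deriv (fun q => R τ q) p = 0) :
    ((1 + X τ p) / X τ p) * Real.log (1 + X τ p) = 2 ∧
    τu / τ = 1 + ((1 + X τ p) / X τ p) * Real.log (1 + X τ p) ∧
    τu / τ = 3 := by
  have hXτ : X τ p = M / (c * p ^ 2 * K ^ 2) * τ := by rw [hX]; ring
  have hXp : X τ p = M * τ / (c * K ^ 2) / p ^ 2 := by rw [hX]; ring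
  have hR_τ : (fun t => R t p) = fun t =>
      p * K / log 2 * ((τu - t) * log (1 + M / (c * p ^ 2 * K ^ 2) * t)) := by
    ext t; rw [hR, hX, logb]; ring_nf
  have hR_p : (fun q => R τ q) = fun q =>
      K * (τu - τ) / log 2 * (q * log (1 + M * τ / (c * K ^ 2) / q ^ 2)) := by
    ext q; rw [hR, hX, logb]; ring_nf
  rw [hR_τ] at hstat1
  rw [hR_p] at hstat2
  have hratio : (τu - τ) / τ = (1 + X τ p) / X τ p * log (1 + X τ p) := hXτ ▸
    sub_div_eq_of_deriv_sub_mul_log_eq_zero (by positivity) hτ.ne' (hXτ ▸ hXpos) hstat1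
  have htwo : (1 + X τ p) / X τ p * log (1 + X τ p) = 2 := hXp ▸
    div_mul_log_eq_two_of_deriv_mul_log_eq_zero (by have := sub_pos.2 hττu; positivity)
      hp.ne' (hXp ▸ hXpos) hstat2
  have hτu : τu / τ = 1 + (τu - τ) / τ := by field_simp; ring
  exact ⟨htwo, hratio ▸ hτu, by rw [hτu, hratio, htwo]; norm_num⟩

/-- At any stationary point `(τ, p)` (with `0 < τ < τ_u`, `p > 0`, `X(τ,p) > 0`) of
`R(τ, p) = p K (τ_u − τ) log₂(1 + X(τ, p))` with `X(τ, p) = M τ / (c p² K²)`,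
one has `((1+X)/X) ln(1+X) = 2` and `τ_u/τ = 1 + ((1+X)/X) ln(1+X) = 3`. -/
theorem stmt5 (M c K τu : ℝ) (hM : 0 < M) (hc : 0 < c) (hK : 0 < K) (hτu : 0 < τu)
    (X R : ℝ → ℝ → ℝ)
    (hX : ∀ τ p : ℝ, X τ p = M * τ / (c * p ^ 2 * K ^ 2))
    (hR : ∀ τ p : ℝ, R τ p = p * K * (τu - τ) * Real.logb 2 (1 + X τ p))
    (τ p : ℝ) (hτ : 0 < τ) (hττu : τ < τu) (hp : 0 < p) (hXpos : 0 < X τ p)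
    (hstat1 : deriv (fun t => R t p) τ = 0)
    (hstat2 : deriv (fun q => R τ q) p = 0) :
    ((1 + X τ p) / X τ p) * Real.log (1 + X τ p) = 2 ∧
    τu / τ = 1 + ((1 + X τ p) / X τ p) * Real.log (1 + X τ p) ∧
    τu / τ = 3 :=
  stmt5_general M c K τu hK X R hX hR τ p hτ hττu hp hXpos hstat1 hstat2
end

section
/- Fix τ > 0 and constants A, B, C > 0, let s₀ be the unique positive solution of ln(1+x) = 2x/(1+x), and define P(M, τ) = √(τ·M/(3·s₀·B)) and S(M, τ) = (M·τ/3) / (A·M·P(M, τ) + B·P(M, τ)² + C·P(M, τ)·τ/3) for M > 0. Then lim_{M→∞} S(M, τ)·√(M/τ) = √(s₀·B/3)/A. In particular, for fixed uplink slot length the heuristic SINR decays like √(τ/M) as the number of antennas M grows. -/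
open Filter Topology

theorem tendsto_div_add_div_sqrt_add_div {A : ℝ} (hA : A ≠ 0) (a b e : ℝ) :
    Tendsto (fun M => a / (A + b / √M + e / M)) atTop (𝓝 (a / A)) := by
  have hb : Tendsto (fun M => b / √M) atTop (𝓝 0) :=
    tendsto_const_nhds.div_atTop Real.tendsto_sqrt_atTop
  have he : Tendsto (fun M : ℝ => e / M) atTop (𝓝 0) :=
    tendsto_const_nhds.div_atTop tendsto_id
  have hden : Tendsto (fun M => A + b / √M + e / M) atTop (𝓝 A) := by
    simpa using (tendsto_const_nhds.add hb).add he
  exact tendsto_const_nhds.div hden hA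

/-- With `P = √(τ M / κ)` the denominator factors as `(P M) · D`, `D` the new denominator;
if `D = 0` both sides are `0`. -/
theorem sinr_mul_sqrt_eq_div_add {κ τ M : ℝ} (hκ : 0 < κ) (hτ : 0 < τ) (hM : 0 < M)
    (A B C : ℝ) :
    (M * τ / 3) / (A * M * √(τ * M / κ) + B * √(τ * M / κ) ^ 2 + C * √(τ * M / κ) * τ / 3)
        * √(M / τ)
      = (√κ / 3) / (A + B * √(τ / κ) / √M + C * τ / 3 / M) := by
  have hsM : 0 < √M := Real.sqrt_pos.mpr hM
  have hsτ : 0 < √τ := Real.sqrt_pos.mpr hτ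
  have hsκ : 0 < √κ := Real.sqrt_pos.mpr hκ
  have hP : √(τ * M / κ) = √τ * √M / √κ := by
    rw [Real.sqrt_div (by positivity), Real.sqrt_mul hτ.le]
  have hk : √(τ / κ) = √τ / √κ := Real.sqrt_div hτ.le _
  have hfactor : A * M * √(τ * M / κ) + B * √(τ * M / κ) ^ 2 + C * √(τ * M / κ) * τ / 3
      = (√(τ * M / κ) * M) * (A + B * √(τ / κ) / √M + C * τ / 3 / M) := by
    rw [hP, hk]
    field_simp
    linear_combination (3 * √τ * B) * Real.mul_self_sqrt hM.le
  have hnum : (M * τ / 3) * √(M / τ) / (√(τ * M / κ) * M) = √κ / 3 := by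
    rw [hP, Real.sqrt_div hM.le]
    field_simp
    rw [Real.sq_sqrt hτ.le]
  rw [hfactor, div_mul_eq_mul_div, ← div_div, hnum]

theorem stmt8_general (A B C τ : ℝ) (hA : 0 < A) (hB : 0 < B) (hτ : 0 < τ)
    (s₀ : ℝ) (hs₀pos : 0 < s₀)
    (P S : ℝ → ℝ → ℝ)
    (hP : ∀ M t : ℝ, P M t = Real.sqrt (t * M / (3 * s₀ * B)))
    (hS : ∀ M t : ℝ, S M t =
      (M * t / 3) / (A * M * P M t + B * (P M t) ^ 2 + C * P M t * t / 3)) :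
    Filter.Tendsto (fun M : ℝ => S M τ * Real.sqrt (M / τ)) Filter.atTop
      (nhds (Real.sqrt (s₀ * B / 3) / A)) := by
  have hκ : 0 < 3 * s₀ * B := by positivity
  have hlim : √(3 * s₀ * B) / 3 = √(s₀ * B / 3) := by
    rw [show s₀ * B / 3 = (3 * s₀ * B) / 3 ^ 2 by ring, Real.sqrt_div' _ (by norm_num),
      Real.sqrt_sq (by norm_num)]
  rw [← hlim]
  refine (tendsto_div_add_div_sqrt_add_div hA.ne' _
    (B * √(τ / (3 * s₀ * B))) (C * τ / 3)).congr' ?_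
  filter_upwards [eventually_gt_atTop 0] with M hM
  rw [hS, hP, sinr_mul_sqrt_eq_div_add hκ hτ hM]

/-- With `P(M, τ) = √(τ M/(3 s₀ B))` and
`S(M, τ) = (M τ/3) / (A M P + B P² + C P τ/3)`, for fixed `τ > 0` one has
`S(M, τ) · √(M/τ) → √(s₀ B / 3)/A` as `M → ∞`: the heuristic SINR decays like
`√(τ/M)`. -/
theorem stmt8 (A B C τ : ℝ) (hA : 0 < A) (hB : 0 < B) (hC : 0 < C) (hτ : 0 < τ)
    (s₀ : ℝ) (hs₀pos : 0 < s₀) (hs₀eq : Real.log (1 + s₀) = 2 * s₀ / (1 + s₀))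
    (P S : ℝ → ℝ → ℝ)
    (hP : ∀ M t : ℝ, P M t = Real.sqrt (t * M / (3 * s₀ * B)))
    (hS : ∀ M t : ℝ, S M t =
      (M * t / 3) / (A * M * P M t + B * (P M t) ^ 2 + C * P M t * t / 3)) :
    Filter.Tendsto (fun M : ℝ => S M τ * Real.sqrt (M / τ)) Filter.atTop
      (nhds (Real.sqrt (s₀ * B / 3) / A)) :=
  stmt8_general A B C τ hA hB hτ s₀ hs₀pos P S hP hS
end

section
/- Fix M > 0 and constants A, B, C > 0, let s₀ be the unique positive solution of ln(1+x) = 2x/(1+x), and define P(M, τ) = √(τ·M/(3·s₀·B)) and S(M, τ) = (M·τ/3) / (A·M·P(M, τ) + B·P(M, τ)² + C·P(M, τ)·τ/3) for τ > 0. Then lim_{τ→∞} S(M, τ)·√(τ/M) = √(3·s₀·B)/C. In particular, for a fixed number of antennas the heuristic SINR decays like √(M/τ) as the uplink slot length τ grows. -/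
/-!
Substituting `u = √τ` gives `P(M, τ) = k u` with `k = √(M/(3 s₀ B))`, and then
`S(M, τ) √(τ/M) = (√M/3) · u³/(A M k u + B k² u² + (C k/3) u³)`. The cubic ratio tends to
`3/(C k)`, and `√M/(C k) = √(3 s₀ B)/C`.
-/

open Filter Topology

lemma tendsto_cube_div_cubic_atTop (a b c : ℝ) (hc : c ≠ 0) :
    Tendsto (fun x : ℝ => x ^ 3 / (a * x + b * x ^ 2 + c * x ^ 3)) atTop (𝓝 c⁻¹) := by
  have hcont : Tendsto (fun y : ℝ => (a * y ^ 2 + b * y + c)⁻¹) (𝓝 0) (𝓝 c⁻¹) := by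
    have : ContinuousAt (fun y : ℝ => (a * y ^ 2 + b * y + c)⁻¹) 0 :=
      ((by fun_prop : Continuous fun y : ℝ => a * y ^ 2 + b * y + c).continuousAt).inv₀
        (by simpa using hc)
    simpa using this.tendsto
  refine (hcont.comp tendsto_inv_atTop_zero).congr' ?_
  filter_upwards [eventually_ne_atTop 0] with x hx
  simp only [Function.comp_apply]
  field_simp

theorem stmt9_general (A B C M : ℝ) (hB : 0 < B) (hC : 0 < C) (hM : 0 < M)
    (s₀ : ℝ) (hs₀pos : 0 < s₀)
    (P S : ℝ → ℝ → ℝ)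
    (hP : ∀ m t : ℝ, P m t = Real.sqrt (t * m / (3 * s₀ * B)))
    (hS : ∀ m t : ℝ, S m t =
      (m * t / 3) / (A * m * P m t + B * (P m t) ^ 2 + C * P m t * t / 3)) :
    Filter.Tendsto (fun τ : ℝ => S M τ * Real.sqrt (τ / M)) Filter.atTop
      (nhds (Real.sqrt (3 * s₀ * B) / C)) := by
  set k := √(M / (3 * s₀ * B)) with hk
  have hk_pos : 0 < k := Real.sqrt_pos.2 (by positivity)
  have hk_mul : k * √(3 * s₀ * B) = √M := by
    rw [hk, ← Real.sqrt_mul (by positivity), div_mul_cancel₀ _ (by positivity)]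
  have hlim : √M / 3 * (C * k / 3)⁻¹ = √(3 * s₀ * B) / C := by
    rw [← hk_mul]
    field_simp
  rw [← hlim]
  refine (((tendsto_cube_div_cubic_atTop (A * M * k) (B * k ^ 2) (C * k / 3)
    (by positivity)).comp Real.tendsto_sqrt_atTop).const_mul (√M / 3)).congr' ?_
  filter_upwards [eventually_ge_atTop 0] with τ hτ
  obtain ⟨u, hu, rfl⟩ : ∃ u, 0 ≤ u ∧ τ = u ^ 2 :=
    ⟨√τ, Real.sqrt_nonneg τ, (Real.sq_sqrt hτ).symm⟩
  have hP_eq : P M (u ^ 2) = k * u := by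
    rw [hP, hk, mul_div_assoc, Real.sqrt_mul (sq_nonneg u), Real.sqrt_sq hu, mul_comm]
  rw [Function.comp_apply, hS, hP_eq, Real.sqrt_div' _ hM.le, Real.sqrt_sq hu]
  have hsM : √M ≠ 0 := (Real.sqrt_pos.2 hM).ne'
  field_simp
  rw [Real.sq_sqrt hM.le]
  ring

/-- With `P(M, τ) = √(τ M/(3 s₀ B))` and
`S(M, τ) = (M τ/3) / (A M P + B P² + C P τ/3)`, for fixed `M > 0` one has
`S(M, τ) · √(τ/M) → √(3 s₀ B)/C` as `τ → ∞`: the heuristic SINR decays like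
`√(M/τ)`. -/
theorem stmt9 (A B C M : ℝ) (hA : 0 < A) (hB : 0 < B) (hC : 0 < C) (hM : 0 < M)
    (s₀ : ℝ) (hs₀pos : 0 < s₀) (hs₀eq : Real.log (1 + s₀) = 2 * s₀ / (1 + s₀))
    (P S : ℝ → ℝ → ℝ)
    (hP : ∀ m t : ℝ, P m t = Real.sqrt (t * m / (3 * s₀ * B)))
    (hS : ∀ m t : ℝ, S m t =
      (m * t / 3) / (A * m * P m t + B * (P m t) ^ 2 + C * P m t * t / 3)) :
    Filter.Tendsto (fun τ : ℝ => S M τ * Real.sqrt (τ / M)) Filter.atTop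
      (nhds (Real.sqrt (3 * s₀ * B) / C)) :=
  stmt9_general A B C M hB hC hM s₀ hs₀pos P S hP hS
end

section
/- Fix τ > 0 and constants A, B, C > 0, let s₀ be the unique positive solution of ln(1+x) = 2x/(1+x), define P(M, τ) = √(τ·M/(3·s₀·B)), S(M, τ) = (M·τ/3) / (A·M·P(M, τ) + B·P(M, τ)² + C·P(M, τ)·τ/3), and the heuristic sum rate R_a(M, τ) = (2/3)·P(M, τ)·log₂(1 + S(M, τ)). Then lim_{M→∞} R_a(M, τ)/τ = 2/(9·A·ln 2). In particular, for fixed uplink slot length the heuristic sum rate tends to a quantity proportional to τ as M → ∞. -/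
/-!
With `c = √(τ / (3 s₀ B))` the number of active terminals is `P = c √M → ∞`, while the
product `P · S = (τ/3) / (A + B P/M + C τ/(3M))` tends to `τ / (3A)`. Hence `S → 0`, so
`P · log(1 + S) ~ P · S → τ / (3A)`, and `R_a / τ = (2 / (3 τ ln 2)) · P · ln(1 + S)` tends to
`2 / (9 A ln 2)`.
-/

open Filter Topology Real

theorem Real.tendsto_log_one_add_div_self :
    Tendsto (fun x : ℝ => log (1 + x) / x) (𝓝[≠] 0) (𝓝 1) := by
  have hderiv : HasDerivAt (fun x : ℝ => log (1 + x)) 1 0 := by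
    simpa using ((hasDerivAt_id (0 : ℝ)).const_add 1).log (by norm_num)
  simpa [div_eq_inv_mul] using hasDerivAt_iff_tendsto_slope_zero.1 hderiv

theorem Real.tendsto_sqrt_div_self_atTop : Tendsto (fun x : ℝ => √x / x) atTop (𝓝 0) :=
  (tendsto_inv_atTop_zero.comp tendsto_sqrt_atTop).congr fun _ => sqrt_div_self.symm

section

variable {α : Type*} {l : Filter α} {f g : α → ℝ} {L : ℝ}

theorem Filter.Tendsto.tendsto_nhdsNE_zero_of_mul (hg : Tendsto g l atTop)
    (hgf : Tendsto (fun x => g x * f x) l (𝓝 L)) (hL : L ≠ 0) : Tendsto f l (𝓝[≠] 0) := by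
  refine tendsto_nhdsWithin_iff.2 ⟨?_, ?_⟩
  · refine (hgf.div_atTop hg).congr' ?_
    filter_upwards [hg.eventually_ne_atTop 0] with x hx
    field_simp [hx]
  · filter_upwards [hgf.eventually_ne hL] with x hx
    exact right_ne_zero_of_mul hx

theorem Filter.Tendsto.mul_log_one_add (hf : Tendsto f l (𝓝[≠] 0))
    (hgf : Tendsto (fun x => g x * f x) l (𝓝 L)) :
    Tendsto (fun x => g x * Real.log (1 + f x)) l (𝓝 L) := by
  have hlim := hgf.mul (tendsto_log_one_add_div_self.comp hf)
  rw [mul_one] at hlim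
  refine hlim.congr' ?_
  filter_upwards [hf.eventually eventually_mem_nhdsWithin] with x hx
  simp only [Function.comp_apply]
  field_simp [show f x ≠ 0 from hx]

end

theorem mul_div_mul_add_sq_add (A B C p m t : ℝ) (hp : p ≠ 0) (hm : m ≠ 0) :
    p * (m * t / 3 / (A * m * p + B * p ^ 2 + C * p * t / 3)) =
      t / 3 / (A + B * (p / m) + C * t / (3 * m)) := by
  rw [show A * m * p + B * p ^ 2 + C * p * t / 3 =
      (p * m) * (A + B * (p / m) + C * t / (3 * m)) by field_simp,
    ← mul_div_assoc, ← mul_div_mul_left (t / 3) _ (mul_ne_zero hp hm)]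
  ring_nf

theorem stmt11_general (A B C τ : ℝ) (hA : 0 < A) (hB : 0 < B) (hτ : 0 < τ)
    (s₀ : ℝ) (hs₀pos : 0 < s₀)
    (P S Ra : ℝ → ℝ → ℝ)
    (hP : ∀ m t : ℝ, P m t = Real.sqrt (t * m / (3 * s₀ * B)))
    (hS : ∀ m t : ℝ, S m t =
      (m * t / 3) / (A * m * P m t + B * (P m t) ^ 2 + C * P m t * t / 3))
    (hRa : ∀ m t : ℝ, Ra m t = (2 / 3) * P m t * Real.logb 2 (1 + S m t)) :
    Filter.Tendsto (fun M : ℝ => Ra M τ / τ) Filter.atTop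
      (nhds (2 / (9 * A * Real.log 2))) := by
  set c := √(τ / (3 * s₀ * B))
  have hc : 0 < c := sqrt_pos.2 (by positivity)
  have hPc : ∀ M, P M τ = c * √M := fun M => by
    rw [hP, ← sqrt_mul (by positivity)]
    ring_nf
  have hPtop : Tendsto (P · τ) atTop atTop := by
    simpa only [hPc] using tendsto_sqrt_atTop.const_mul_atTop hc
  have hden : Tendsto (fun M => A + B * (P M τ / M) + C * τ / (3 * M)) atTop (𝓝 A) := by
    have hPM : Tendsto (fun M => P M τ / M) atTop (𝓝 0) := by
      simpa only [hPc, mul_div_assoc, mul_zero] using tendsto_sqrt_div_self_atTop.const_mul c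
    have hM : Tendsto (fun M : ℝ => C * τ / (3 * M)) atTop (𝓝 0) :=
      tendsto_const_nhds.div_atTop (tendsto_id.const_mul_atTop (by norm_num))
    simpa using (hPM.const_mul B).const_add A |>.add hM
  have hPS : Tendsto (fun M => P M τ * S M τ) atTop (𝓝 (τ / 3 / A)) := by
    refine (tendsto_const_nhds.div hden hA.ne').congr' ?_
    filter_upwards [eventually_gt_atTop 0] with M hM
    rw [Pi.div_apply, hS, mul_div_mul_add_sq_add _ _ _ _ _ _ (by rw [hPc]; positivity) hM.ne']
  have hS0 : Tendsto (S · τ) atTop (𝓝[≠] 0) :=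
    hPtop.tendsto_nhdsNE_zero_of_mul hPS (by positivity)
  have hSlog := hS0.mul_log_one_add hPS
  convert hSlog.const_mul (2 / (3 * τ * log 2)) using 2 with M
  · rw [hRa, logb]
    field_simp
  · field_simp
    ring

/-- For the heuristic sum rate `R_a(M, τ) = (2/3) P(M, τ) log₂(1 + S(M, τ))`, with
`P(M, τ) = √(τ M/(3 s₀ B))` and `S(M, τ) = (M τ/3)/(A M P + B P² + C P τ/3)`,
for fixed `τ > 0` one has `R_a(M, τ)/τ → 2/(9 A ln 2)` as `M → ∞`; i.e. the
heuristic sum rate tends to a quantity proportional to `τ`. -/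
theorem stmt11 (A B C τ : ℝ) (hA : 0 < A) (hB : 0 < B) (hC : 0 < C) (hτ : 0 < τ)
    (s₀ : ℝ) (hs₀pos : 0 < s₀) (hs₀eq : Real.log (1 + s₀) = 2 * s₀ / (1 + s₀))
    (P S Ra : ℝ → ℝ → ℝ)
    (hP : ∀ m t : ℝ, P m t = Real.sqrt (t * m / (3 * s₀ * B)))
    (hS : ∀ m t : ℝ, S m t =
      (m * t / 3) / (A * m * P m t + B * (P m t) ^ 2 + C * P m t * t / 3))
    (hRa : ∀ m t : ℝ, Ra m t = (2 / 3) * P m t * Real.logb 2 (1 + S m t)) :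
    Filter.Tendsto (fun M : ℝ => Ra M τ / τ) Filter.atTop
      (nhds (2 / (9 * A * Real.log 2))) :=
  stmt11_general A B C τ hA hB hτ s₀ hs₀pos P S Ra hP hS hRa
end

section
/- Fix M > 0 and constants A, B, C > 0, let s₀ be the unique positive solution of ln(1+x) = 2x/(1+x), define P(M, τ) = √(τ·M/(3·s₀·B)), S(M, τ) = (M·τ/3) / (A·M·P(M, τ) + B·P(M, τ)² + C·P(M, τ)·τ/3), and R_a(M, τ) = (2/3)·P(M, τ)·log₂(1 + S(M, τ)). Then lim_{τ→∞} R_a(M, τ) = 2·M/(3·C·ln 2). In particular, for a fixed number of antennas the heuristic sum rate tends to a quantity proportional to M as τ → ∞. -/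
/-!
Since `P² = τ M / (3 s₀ B)`, the product `P S = M / (C + 3 A M / τ + M / (s₀ P))` tends to `M / C`,
while `P → ∞` forces `S → 0`. Writing `log (1 + S) = S · g S` with `g` the difference quotient of
`x ↦ log (1 + x)` at `0`, which is continuous with `g 0 = 1`, gives `P log (1 + S) → M / C`.
-/

open Filter Real Topology

theorem Filter.Tendsto.mul_log_one_add_s12 {α : Type*} {l : Filter α} {p s : α → ℝ} {L : ℝ}
    (hp : Tendsto p l atTop) (hps : Tendsto (fun x => p x * s x) l (𝓝 L)) :
    Tendsto (fun x => p x * Real.log (1 + s x)) l (𝓝 L) := by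
  set g := dslope (fun y : ℝ => Real.log (1 + y)) 0
  have hs : Tendsto s l (𝓝 0) := by
    refine (hps.div_atTop hp).congr' ?_
    filter_upwards [hp.eventually_ne_atTop 0] with x hx
    field_simp
  have hdiff : HasDerivAt (fun y : ℝ => Real.log (1 + y)) 1 0 := by
    simpa using ((hasDerivAt_id (0 : ℝ)).const_add 1).log (by norm_num)
  have hg : ContinuousAt g 0 := continuousAt_dslope_same.2 hdiff.differentiableAt
  have hg0 : g 0 = 1 := (dslope_same _ _).trans hdiff.deriv
  have hlog : ∀ y, Real.log (1 + y) = y * g y := fun y => by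
    simpa using (sub_smul_dslope (fun y : ℝ => Real.log (1 + y)) 0 y).symm
  have := hps.mul (hg0 ▸ hg.tendsto.comp hs)
  simpa only [hlog, mul_one, ← mul_assoc, Function.comp_def] using this

theorem mul_sinr_eq {A B C M s₀ p t : ℝ} (hB : B ≠ 0) (hs₀ : s₀ ≠ 0) (ht : t ≠ 0) (hp : p ≠ 0)
    (hp2 : p ^ 2 = t * M / (3 * s₀ * B)) :
    p * ((M * t / 3) / (A * M * p + B * p ^ 2 + C * p * t / 3)) =
      M / (C + 3 * A * M / t + M / (s₀ * p)) := by
  have hden : C + 3 * A * M / t + M / (s₀ * p) =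
      3 * (A * M * p + B * p ^ 2 + C * p * t / 3) / (t * p) := by
    have hMp : M = 3 * s₀ * B * p ^ 2 / t := by rw [hp2]; field_simp
    rw [hMp]; field_simp; ring
  rw [hden]
  generalize A * M * p + B * p ^ 2 + C * p * t / 3 = D
  field_simp

theorem stmt12_general (A B C M : ℝ) (hB : 0 < B) (hC : 0 < C) (hM : 0 < M)
    (s₀ : ℝ) (hs₀pos : 0 < s₀)
    (P S Ra : ℝ → ℝ → ℝ)
    (hP : ∀ m t : ℝ, P m t = Real.sqrt (t * m / (3 * s₀ * B)))
    (hS : ∀ m t : ℝ, S m t =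
      (m * t / 3) / (A * m * P m t + B * (P m t) ^ 2 + C * P m t * t / 3))
    (hRa : ∀ m t : ℝ, Ra m t = (2 / 3) * P m t * Real.logb 2 (1 + S m t)) :
    Filter.Tendsto (fun τ : ℝ => Ra M τ) Filter.atTop
      (nhds (2 * M / (3 * C * Real.log 2))) := by
  have hPtop : Tendsto (P M) atTop atTop := by
    rw [funext (hP M)]
    exact tendsto_sqrt_atTop.comp
      ((tendsto_id.atTop_mul_const hM).atTop_div_const (by positivity))
  have hPS : Tendsto (fun t => P M t * S M t) atTop (𝓝 (M / C)) := by
    have hden : Tendsto (fun t => C + 3 * A * M / t + M / (s₀ * P M t)) atTop (𝓝 C) := by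
      simpa using (tendsto_const_nhds.add (tendsto_const_nhds.div_atTop tendsto_id)).add
        (tendsto_const_nhds.div_atTop (hPtop.const_mul_atTop hs₀pos))
    refine (tendsto_const_nhds.div hden hC.ne').congr' ?_
    filter_upwards [eventually_gt_atTop 0, hPtop.eventually_gt_atTop 0] with t ht hPt
    have hPsq : P M t ^ 2 = t * M / (3 * s₀ * B) := by rw [hP, sq_sqrt (by positivity)]
    rw [Pi.div_apply, hS, mul_sinr_eq hB.ne' hs₀pos.ne' ht.ne' hPt.ne' hPsq]
  convert (hPtop.mul_log_one_add_s12 hPS).const_mul (2 / (3 * Real.log 2)) using 1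
  · ext t
    rw [hRa, logb]
    ring
  · field_simp

/-- For the heuristic sum rate `R_a(M, τ) = (2/3) P(M, τ) log₂(1 + S(M, τ))`, with
`P(M, τ) = √(τ M/(3 s₀ B))` and `S(M, τ) = (M τ/3)/(A M P + B P² + C P τ/3)`,
for fixed `M > 0` one has `R_a(M, τ) → 2 M/(3 C ln 2)` as `τ → ∞`; i.e. the
heuristic sum rate tends to a quantity proportional to `M`. -/
theorem stmt12 (A B C M : ℝ) (hA : 0 < A) (hB : 0 < B) (hC : 0 < C) (hM : 0 < M)
    (s₀ : ℝ) (hs₀pos : 0 < s₀) (hs₀eq : Real.log (1 + s₀) = 2 * s₀ / (1 + s₀))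
    (P S Ra : ℝ → ℝ → ℝ)
    (hP : ∀ m t : ℝ, P m t = Real.sqrt (t * m / (3 * s₀ * B)))
    (hS : ∀ m t : ℝ, S m t =
      (m * t / 3) / (A * m * P m t + B * (P m t) ^ 2 + C * P m t * t / 3))
    (hRa : ∀ m t : ℝ, Ra m t = (2 / 3) * P m t * Real.logb 2 (1 + S m t)) :
    Filter.Tendsto (fun τ : ℝ => Ra M τ) Filter.atTop
      (nhds (2 * M / (3 * C * Real.log 2))) :=
  stmt12_general A B C M hB hC hM s₀ hs₀pos P S Ra hP hS hRa
end

section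
/- Let A, B, C, λ > 0, let s₀ be the unique positive solution of ln(1+x) = 2x/(1+x), define P(M, τ) = √(τ·M/(3·s₀·B)), S(M, τ) = (M·τ/3) / (A·M·P(M, τ) + B·P(M, τ)² + C·P(M, τ)·τ/3), and R_a(M, τ) = (2/3)·P(M, τ)·log₂(1 + S(M, τ)). Then for every τ > 0, R_a(λτ, τ) = τ·√(λ/(3·s₀·B))·(2/3)·log₂(1 + S(λτ, τ)), where S(λτ, τ) does not depend on τ; consequently R_a(λτ, τ)/√((λτ)·τ) is independent of τ, i.e., the heuristic sum rate scales as √(M·τ_u) when M and τ_u grow proportionally. -/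
/-!
With `M = λτ` the load `τ M` is `λτ²`, so `P(λτ, τ) = τ √(λ/(3 s₀ B))` is linear in `τ`.
Every term of the SINR is then homogeneous of degree two in `τ`, so `τ²` cancels and
`S(λτ, τ)` is a constant; hence `R_a(λτ, τ)` is `τ` times a constant, as is `√(λτ · τ)`.
-/

namespace Real

lemma sqrt_mul_self_mul_of_nonneg {t : ℝ} (ht : 0 ≤ t) (x : ℝ) : √(t * t * x) = t * √x := by
  rw [sqrt_mul (mul_self_nonneg t), sqrt_mul_self ht]

lemma sqrt_mul_mul_self_div_of_nonneg {t : ℝ} (ht : 0 ≤ t) (a c : ℝ) :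
    √(t * (a * t) / c) = t * √(a / c) := by
  rw [← sqrt_mul_self_mul_of_nonneg ht]
  ring_nf

end Real

lemma div_homogeneous_quadratic_eq {τ : ℝ} (hτ : τ ≠ 0) (A B C lam k : ℝ) :
    (lam * τ * τ / 3) / (A * (lam * τ) * (τ * k) + B * (τ * k) ^ 2 + C * (τ * k) * τ / 3) =
      (lam / 3) / (A * lam * k + B * k ^ 2 + C * k / 3) := by
  rw [← mul_div_mul_left _ (A * lam * k + B * k ^ 2 + C * k / 3) (pow_ne_zero 2 hτ)]
  ring_nf

theorem stmt13_general (A B C lam : ℝ)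
    (s₀ : ℝ)
    (P S Ra : ℝ → ℝ → ℝ)
    (hP : ∀ m t : ℝ, P m t = Real.sqrt (t * m / (3 * s₀ * B)))
    (hS : ∀ m t : ℝ, S m t =
      (m * t / 3) / (A * m * P m t + B * (P m t) ^ 2 + C * P m t * t / 3))
    (hRa : ∀ m t : ℝ, Ra m t = (2 / 3) * P m t * Real.logb 2 (1 + S m t)) :
    (∀ τ : ℝ, 0 < τ →
      Ra (lam * τ) τ =
        τ * Real.sqrt (lam / (3 * s₀ * B)) * (2 / 3) * Real.logb 2 (1 + S (lam * τ) τ)) ∧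
    (∀ τ₁ τ₂ : ℝ, 0 < τ₁ → 0 < τ₂ → S (lam * τ₁) τ₁ = S (lam * τ₂) τ₂) ∧
    ∀ τ₁ τ₂ : ℝ, 0 < τ₁ → 0 < τ₂ →
      Ra (lam * τ₁) τ₁ / Real.sqrt ((lam * τ₁) * τ₁) =
        Ra (lam * τ₂) τ₂ / Real.sqrt ((lam * τ₂) * τ₂) := by
  set k := Real.sqrt (lam / (3 * s₀ * B))
  set S₀ := (lam / 3) / (A * lam * k + B * k ^ 2 + C * k / 3)
  have hP_scaled {τ : ℝ} (hτ : 0 < τ) : P (lam * τ) τ = τ * k := by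
    rw [hP, Real.sqrt_mul_mul_self_div_of_nonneg hτ.le]
  have hS_scaled {τ : ℝ} (hτ : 0 < τ) : S (lam * τ) τ = S₀ := by
    rw [hS, hP_scaled hτ, div_homogeneous_quadratic_eq hτ.ne']
  have hRa_scaled {τ : ℝ} (hτ : 0 < τ) :
      Ra (lam * τ) τ = τ * (k * (2 / 3) * Real.logb 2 (1 + S₀)) := by
    rw [hRa, hP_scaled hτ, hS_scaled hτ]
    ring
  have hRa_normalized {τ : ℝ} (hτ : 0 < τ) :
      Ra (lam * τ) τ / Real.sqrt ((lam * τ) * τ) =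
        k * (2 / 3) * Real.logb 2 (1 + S₀) / Real.sqrt lam := by
    rw [hRa_scaled hτ, show lam * τ * τ = τ * τ * lam by ring,
      Real.sqrt_mul_self_mul_of_nonneg hτ.le,
      mul_div_mul_left _ _ hτ.ne']
  refine ⟨fun τ hτ => ?_, fun τ₁ τ₂ h₁ h₂ => ?_, fun τ₁ τ₂ h₁ h₂ => ?_⟩
  · rw [hRa_scaled hτ, hS_scaled hτ]
    ring
  · rw [hS_scaled h₁, hS_scaled h₂]
  · rw [hRa_normalized h₁, hRa_normalized h₂]

/-- For the heuristic sum rate `R_a(M, τ) = (2/3) P(M, τ) log₂(1 + S(M, τ))`, with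
`P(M, τ) = √(τ M/(3 s₀ B))` and `S(M, τ) = (M τ/3)/(A M P + B P² + C P τ/3)`,
when `M = λ τ` one has `R_a(λτ, τ) = τ √(λ/(3 s₀ B)) (2/3) log₂(1 + S(λτ, τ))`,
where `S(λτ, τ)` does not depend on `τ`; consequently `R_a(λτ, τ)/√((λτ)·τ)` is
independent of `τ`: the heuristic sum rate scales as `√(M τ_u)`. -/
theorem stmt13 (A B C lam : ℝ) (hA : 0 < A) (hB : 0 < B) (hC : 0 < C) (hlam : 0 < lam)
    (s₀ : ℝ) (hs₀pos : 0 < s₀) (hs₀eq : Real.log (1 + s₀) = 2 * s₀ / (1 + s₀))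
    (P S Ra : ℝ → ℝ → ℝ)
    (hP : ∀ m t : ℝ, P m t = Real.sqrt (t * m / (3 * s₀ * B)))
    (hS : ∀ m t : ℝ, S m t =
      (m * t / 3) / (A * m * P m t + B * (P m t) ^ 2 + C * P m t * t / 3))
    (hRa : ∀ m t : ℝ, Ra m t = (2 / 3) * P m t * Real.logb 2 (1 + S m t)) :
    (∀ τ : ℝ, 0 < τ →
      Ra (lam * τ) τ =
        τ * Real.sqrt (lam / (3 * s₀ * B)) * (2 / 3) * Real.logb 2 (1 + S (lam * τ) τ)) ∧
    (∀ τ₁ τ₂ : ℝ, 0 < τ₁ → 0 < τ₂ → S (lam * τ₁) τ₁ = S (lam * τ₂) τ₂) ∧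
    ∀ τ₁ τ₂ : ℝ, 0 < τ₁ → 0 < τ₂ →
      Ra (lam * τ₁) τ₁ / Real.sqrt ((lam * τ₁) * τ₁) =
        Ra (lam * τ₂) τ₂ / Real.sqrt ((lam * τ₂) * τ₂) :=
  stmt13_general A B C lam s₀ P S Ra hP hS hRa
end
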